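/- For every i with 2 ≤ i ≤ n−1, the numbers a^{(0)}_i, a^{(1)}_i, …, a^{(i−1)}_i are all equal, where a^{(j)}_i denotes the i-th component of R(π^{(j)}). -/

import Mathlib

/-- Underlying function of the suffix block transposition `κ_{i,s}`:
`j ↦ j` for `j < i`, and `j ↦ i + ((j - i + s) mod (n - i))` for `i ≤ j ≤ n-1`. -/
def kappaFun (n i s : ℕ) (j : Fin n) : Fin n :=
  if h : (j : ℕ) < i then j
  else ⟨i + (((j : ℕ) - i + s) % (n - i)), by
    have hj := j.isLt
    have hpos : 0 < n - i := by omega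
    have hm := Nat.mod_lt ((j : ℕ) - i + s) hpos
    omega⟩

theorem kappaFun_injective (n i s : ℕ) : Function.Injective (kappaFun n i s) := by
  intro a b hab
  unfold kappaFun at hab
  by_cases ha : (a : ℕ) < i <;> by_cases hb : (b : ℕ) < i
  · rw [dif_pos ha, dif_pos hb] at hab
    exact hab
  · rw [dif_pos ha, dif_neg hb] at hab
    have h := congrArg Fin.val hab
    simp only at h
    omega
  · rw [dif_neg ha, dif_pos hb] at hab
    have h := congrArg Fin.val hab
    simp only at h
    omega
  · rw [dif_neg ha, dif_neg hb] at hab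
    have h := congrArg Fin.val hab
    simp only at h
    have h1 : ((a : ℕ) - i + s) % (n - i) = ((b : ℕ) - i + s) % (n - i) := by omega
    have h2 : ((a : ℕ) - i) % (n - i) = ((b : ℕ) - i) % (n - i) :=
      Nat.ModEq.add_right_cancel' s h1
    have ha' : (a : ℕ) - i < n - i := by have := a.isLt; omega
    have hb' : (b : ℕ) - i < n - i := by have := b.isLt; omega
    rw [Nat.mod_eq_of_lt ha', Nat.mod_eq_of_lt hb'] at h2
    exact Fin.ext (by omega)

/-- The suffix block transposition `κ_{i,s}` as a permutation of `Fin n`. -/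
noncomputable def kappa (n i s : ℕ) : Equiv.Perm (Fin n) :=
  Equiv.ofBijective _ (Finite.injective_iff_bijective.mp (kappaFun_injective n i s))

/-- `V_n`: vectors `[a_0,…,a_{n-1}]` with `1 ≤ a_j ≤ j+1` for each `j`. -/
def Vn (n : ℕ) : Set (Fin n → ℕ) :=
  {a | ∀ j : Fin n, 1 ≤ a j ∧ a j ≤ (j : ℕ) + 1}

/-- `Φ([a_0,…,a_{n-1}]) = κ_{n-2,a_1} ∘ κ_{n-3,a_2} ∘ ⋯ ∘ κ_{1,a_{n-2}} ∘ κ_{0,a_{n-1}}`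
(the factor for `j = 0` is `κ_{n-1,a_0}`, which is the identity permutation). -/
noncomputable def Phi (n : ℕ) (a : Fin n → ℕ) : Equiv.Perm (Fin n) :=
  ((List.finRange n).map (fun (j : Fin n) => kappa n (n - 1 - (j : ℕ)) (a j))).prod

/-- `W_{T,n}`: vectors in `V_n` whose parity (sum of components) is `≡ T (mod n)`. -/
def Wset (n : ℕ) (T : ℤ) : Set (Fin n → ℕ) :=
  {a | a ∈ Vn n ∧ Int.ModEq (n : ℤ) ((∑ j, a j : ℕ) : ℤ) T}

/-- `C_{T,n} = {(Φ(α))⁻¹ : α ∈ W_{T,n}}`. -/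
def Cset (n : ℕ) (T : ℤ) : Set (Equiv.Perm (Fin n)) :=
  {π | ∃ a ∈ Wset n T, π = (Phi n a)⁻¹}

/-- `cinv n π j = π⁻¹(j)` as a natural number (junk value `0` out of range). -/
def cinv (n : ℕ) (π : Equiv.Perm (Fin n)) (j : ℕ) : ℕ :=
  if h : j < n then (π.symm ⟨j, h⟩ : ℕ) else 0

/-- The `i`-th component of a vector indexed by `Fin n` (junk value `0` out of range). -/
def Rcomp (n : ℕ) (v : Fin n → ℕ) (i : ℕ) : ℕ :=
  if h : i < n then v ⟨i, h⟩ else 0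

/-!
Split `Φ(v) = H(v) * T(v)`, where the head `H(v)` is the product of the factors
`κ_{n-1-j, v_j}` with `j < k` and the tail `T(v)` only sees the components `v_j` with `j ≥ k`.
Every head factor fixes the points below `n - k`, so `H(v)` lies in the pointwise stabilizer of
`{0, …, n-k-1}`, a group of order `k!`. Freezing the tail components and letting the head ones
range over their `k!` admissible values, `H` is injective (as `Φ` is), hence onto that stabilizer.
Since `κ_{n-k,1}` lies in it, `κ_{n-k,1} * Φ(v) = Φ(w)` for some `w` that agrees with `v` in all
components `j ≥ k`. For `π^{(j)}` take `k = j + 1 ≤ i`.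
-/

open Equiv

lemma kappa_apply_of_lt {n i s : ℕ} {x : Fin n} (hx : (x : ℕ) < i) : kappa n i s x = x := by
  show kappaFun n i s x = x
  rw [kappaFun, dif_pos hx]

lemma kappa_mem_fixingSubgroup (n i s : ℕ) :
    kappa n i s ∈ fixingSubgroup (Perm (Fin n)) {z : Fin n | (z : ℕ) < i} :=
  (mem_fixingSubgroup_iff _).mpr fun _ hz => kappa_apply_of_lt hz

lemma Nat.card_fixingSubgroup_perm {α : Type*} [Finite α] (s : Set α) :
    Nat.card (fixingSubgroup (Perm α) s) = (Nat.card ↥sᶜ).factorial := by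
  classical
  rw [← Nat.card_perm]
  exact Nat.card_congr <| (Equiv.subtypeEquivRight fun σ => by
    simp [mem_fixingSubgroup_iff, Perm.smul_def]).trans (Perm.subtypeEquivSubtypePerm (· ∈ sᶜ)).symm

lemma Nat.card_compl_setOf_val_lt {n k : ℕ} (hk : k ≤ n) :
    Nat.card ↥({z : Fin n | (z : ℕ) < n - k}ᶜ) = k := by
  rw [Nat.card_coe_set_eq, Set.ncard_compl, ← Nat.card_coe_set_eq]
  simp [Fin.card_filter_val_lt]
  omega

lemma Nat.card_pi_fin_succ (k : ℕ) : Nat.card (∀ j : Fin k, Fin (j + 1)) = k.factorial := by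
  rw [Nat.card_pi]
  simp only [Nat.card_eq_fintype_card, Fintype.card_fin]
  rw [Fin.prod_univ_eq_prod_range (· + 1) k, Finset.prod_range_add_one_eq_factorial]

lemma List.val_lt_of_mem_take_finRange {n k : ℕ} {x : Fin n}
    (h : x ∈ (List.finRange n).take k) : (x : ℕ) < k := by
  obtain ⟨j, hj, rfl⟩ := List.mem_take_iff_getElem.mp h
  simp only [List.length_finRange, List.getElem_finRange, Fin.val_cast] at hj ⊢
  omega

lemma List.le_val_of_mem_drop_finRange {n k : ℕ} {x : Fin n}
    (h : x ∈ (List.finRange n).drop k) : k ≤ (x : ℕ) := by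
  obtain ⟨j, hj, rfl⟩ := List.mem_drop_iff_getElem.mp h
  simp

section PhiSplit

noncomputable def phiHead (n k : ℕ) (v : Fin n → ℕ) : Perm (Fin n) :=
  (((List.finRange n).take k).map fun (j : Fin n) => kappa n (n - 1 - (j : ℕ)) (v j)).prod

noncomputable def phiTail (n k : ℕ) (v : Fin n → ℕ) : Perm (Fin n) :=
  (((List.finRange n).drop k).map fun (j : Fin n) => kappa n (n - 1 - (j : ℕ)) (v j)).prod

variable {n k : ℕ}

lemma Phi_eq_phiHead_mul_phiTail (v : Fin n → ℕ) : Phi n v = phiHead n k v * phiTail n k v := by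
  rw [phiHead, phiTail, ← List.prod_append, ← List.map_append, List.take_append_drop, Phi]

lemma phiTail_congr {v w : Fin n → ℕ} (h : ∀ j : Fin n, k ≤ (j : ℕ) → v j = w j) :
    phiTail n k v = phiTail n k w :=
  congrArg List.prod <| List.map_congr_left fun j hj =>
    by rw [h j (List.le_val_of_mem_drop_finRange hj)]

lemma phiHead_mem_fixingSubgroup (v : Fin n → ℕ) :
    phiHead n k v ∈ fixingSubgroup (Perm (Fin n)) {z : Fin n | (z : ℕ) < n - k} := by
  refine Subgroup.list_prod_mem _ fun σ hσ => ?_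
  obtain ⟨j, hj, rfl⟩ := List.mem_map.mp hσ
  have hjk := List.val_lt_of_mem_take_finRange hj
  have hsub : {z : Fin n | (z : ℕ) < n - k} ⊆ {z | (z : ℕ) < n - 1 - j} :=
    fun z (hz : (z : ℕ) < n - k) => show (z : ℕ) < n - 1 - j by omega
  exact fixingSubgroup_antitone _ _ hsub (kappa_mem_fixingSubgroup n _ _)

def replaceHead (a : Fin n → ℕ) (c : ∀ j : Fin k, Fin (j + 1)) (j : Fin n) : ℕ :=
  if h : (j : ℕ) < k then c ⟨j, h⟩ + 1 else a j

lemma replaceHead_of_le (a : Fin n → ℕ) (c : ∀ j : Fin k, Fin (j + 1)) {j : Fin n}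
    (hj : k ≤ (j : ℕ)) : replaceHead a c j = a j :=
  dif_neg (by omega)

lemma replaceHead_mem_Vn {a : Fin n → ℕ} (ha : a ∈ Vn n) (c : ∀ j : Fin k, Fin (j + 1)) :
    replaceHead a c ∈ Vn n := by
  intro j
  by_cases hj : (j : ℕ) < k
  · have : (c ⟨j, hj⟩ : ℕ) < j + 1 := (c ⟨j, hj⟩).isLt
    simp only [replaceHead, dif_pos hj]
    omega
  · rw [replaceHead_of_le a c (not_lt.mp hj)]
    exact ha j

lemma replaceHead_injective (hk : k ≤ n) (a : Fin n → ℕ) :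
    Function.Injective (replaceHead (k := k) a) := by
  intro c₁ c₂ h
  funext j
  have hj := congrFun h ⟨j, by omega⟩
  exact Fin.ext (by simpa [replaceHead] using hj)

theorem exists_mem_Vn_Phi_eq_mul (hinj : Set.InjOn (Phi n) (Vn n)) (hk : k ≤ n)
    {a : Fin n → ℕ} (ha : a ∈ Vn n) {τ : Perm (Fin n)}
    (hτ : τ ∈ fixingSubgroup (Perm (Fin n)) {z : Fin n | (z : ℕ) < n - k}) :
    ∃ b ∈ Vn n, (∀ j : Fin n, k ≤ (j : ℕ) → b j = a j) ∧ Phi n b = τ * Phi n a := by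
  have htail (c) : phiTail n k (replaceHead a c) = phiTail n k a :=
    phiTail_congr fun _ hj => replaceHead_of_le a c hj
  let head (c : ∀ j : Fin k, Fin (j + 1)) :
      fixingSubgroup (Perm (Fin n)) {z : Fin n | (z : ℕ) < n - k} :=
    ⟨phiHead n k (replaceHead a c), phiHead_mem_fixingSubgroup _⟩
  have head_injective : Function.Injective head := by
    intro c₁ c₂ h
    refine replaceHead_injective hk a
      (hinj (replaceHead_mem_Vn ha c₁) (replaceHead_mem_Vn ha c₂) ?_)
    simp only [Phi_eq_phiHead_mul_phiTail (k := k), htail]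
    exact congrArg (· * phiTail n k a) (congrArg Subtype.val h)
  have head_bijective : Function.Bijective head :=
    head_injective.bijective_of_nat_card_le <| by
      rw [Nat.card_fixingSubgroup_perm, Nat.card_compl_setOf_val_lt hk, Nat.card_pi_fin_succ]
  obtain ⟨c, hc⟩ := head_bijective.2 ⟨τ * phiHead n k a, mul_mem hτ (phiHead_mem_fixingSubgroup a)⟩
  refine ⟨replaceHead a c, replaceHead_mem_Vn ha c, fun _ hj => replaceHead_of_le a c hj, ?_⟩
  simp only [Phi_eq_phiHead_mul_phiTail (k := k), htail, ← mul_assoc]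
  exact congrArg (· * phiTail n k a) (congrArg Subtype.val hc)

end PhiSplit

theorem stmt_9_general (n : ℕ)
    (R : Equiv.Perm (Fin n) → (Fin n → ℕ))
    (hR1 : ∀ π, R π ∈ Vn n) (hR2 : ∀ π, Phi n (R π) = π)
    (hR3 : ∀ a ∈ Vn n, R (Phi n a) = a)
    (ρ : Equiv.Perm (Fin n)) :
    ∀ i : ℕ, 2 ≤ i → i + 1 ≤ n → ∀ j₁ j₂ : ℕ, j₁ < i → j₂ < i →
      Rcomp n (R (kappa n (n - j₁ - 1) 1 * ρ)) i =
        Rcomp n (R (kappa n (n - j₂ - 1) 1 * ρ)) i := by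
  intro i _ hin j₁ j₂ hj₁ hj₂
  have hinj : Set.InjOn (Phi n) (Vn n) := fun a ha b hb h => by rw [← hR3 a ha, h, hR3 b hb]
  have hi : i < n := by omega
  have key (j : ℕ) (hj : j < i) :
      Rcomp n (R (kappa n (n - j - 1) 1 * ρ)) i = Rcomp n (R ρ) i := by
    obtain ⟨b, hb, hba, hPhi⟩ := exists_mem_Vn_Phi_eq_mul (k := j + 1) hinj (by omega) (hR1 ρ)
      (kappa_mem_fixingSubgroup n _ 1)
    rw [hR2] at hPhi
    rw [Rcomp, Rcomp, dif_pos hi, dif_pos hi, Nat.sub_sub, ← hPhi, hR3 b hb]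
    exact hba ⟨i, hi⟩ hj
  rw [key j₁ hj₁, key j₂ hj₂]

theorem stmt_9 (n : ℕ) (hn : 2 ≤ n)
    (R : Equiv.Perm (Fin n) → (Fin n → ℕ))
    (hR1 : ∀ π, R π ∈ Vn n) (hR2 : ∀ π, Phi n (R π) = π)
    (hR3 : ∀ a ∈ Vn n, R (Phi n a) = a)
    (ρ : Equiv.Perm (Fin n)) :
    ∀ i : ℕ, 2 ≤ i → i + 1 ≤ n → ∀ j₁ j₂ : ℕ, j₁ < i → j₂ < i →
      Rcomp n (R (kappa n (n - j₁ - 1) 1 * ρ)) i =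
        Rcomp n (R (kappa n (n - j₂ - 1) 1 * ρ)) i :=
  stmt_9_general n R hR1 hR2 hR3 ρ
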